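/- Let m ≥ 2 and 1 ≤ k ≤ ⌊m/2⌋, and set g_{m,k} = (1/4)(1 + tan²(πk/(m+1))). Then the function g ↦ g^{m/2}/U_m(1/(2√g)), defined for real g > 1/4 with U_m(1/(2√g)) ≠ 0, satisfies lim_{g → g_{m,k}} (g − g_{m,k}) · g^{m/2}/U_m(1/(2√g)) = g_{m,k}^m · ((−1)^k/(m+1)) · g_{m,k}^{(1−m)/2} · tan²(πk/(m+1)); in particular g_{m,k} is a simple pole of the rational function g ↦ g^{m/2}/U_m(1/(2√g)) with the stated residue. -/

import Mathlib

/-!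
Under `x = 1 / (2 √g)` the point `g_{m,k}` goes to `cos θ`, `θ = π k / (m + 1) ∈ (0, π / 2)`, a
simple zero of `U_m`. Hence `(g - g_{m,k}) (√g)^m / U_m(1 / (2 √g))` tends to `(√g_{m,k})^m`
divided by the derivative of `g ↦ U_m(1 / (2 √g))` at `g_{m,k}`. Differentiating
`U_m(cos t) sin t = sin ((m + 1) t)` at `t = θ` gives `U_m'(cos θ) = -(m + 1) (-1)^k / sin² θ`.
-/

open scoped Real BigOperators Topology

open Filter Polynomial Polynomial.Chebyshev Real

theorem tendsto_sub_mul_div_of_hasDerivAt {𝕜 : Type*} [NontriviallyNormedField 𝕜]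
    {f h : 𝕜 → 𝕜} {a c : 𝕜} (hf : HasDerivAt f c a) (hfa : f a = 0) (hc : c ≠ 0)
    (hh : ContinuousAt h a) :
    Tendsto (fun x => (x - a) * (h x / f x)) (𝓝[≠] a) (𝓝 (h a / c)) := by
  have hslope : Tendsto (fun x => f x / (x - a)) (𝓝[≠] a) (𝓝 c) := by
    refine (hasDerivAt_iff_tendsto_slope.mp hf).congr fun x => ?_
    rw [slope_def_field, hfa, sub_zero]
  refine ((hh.tendsto.mono_left nhdsWithin_le_nhds).div hslope hc).congr fun x => ?_
  rw [Pi.div_apply, div_div_eq_mul_div, mul_comm, mul_div_assoc]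

namespace Polynomial.Chebyshev

variable {n : ℤ} {θ : ℝ}

theorem U_real_eval_cos_eq_zero (hθ : sin θ ≠ 0) (h : sin ((n + 1) * θ) = 0) :
    (U ℝ n).eval (cos θ) = 0 :=
  (mul_eq_zero.mp ((U_real_cos θ n).trans h)).resolve_right hθ

theorem derivative_U_real_eval_cos (hθ : sin θ ≠ 0) (h : sin ((n + 1) * θ) = 0) :
    (derivative (U ℝ n)).eval (cos θ) = -((n + 1) * cos ((n + 1) * θ)) / sin θ ^ 2 := by
  have hlhs : HasDerivAt (fun t => (U ℝ n).eval (cos t) * sin t)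
      ((derivative (U ℝ n)).eval (cos θ) * -sin θ * sin θ + (U ℝ n).eval (cos θ) * cos θ) θ :=
    (((U ℝ n).hasDerivAt (cos θ)).comp θ (hasDerivAt_cos θ)).mul (hasDerivAt_sin θ)
  have hrhs : HasDerivAt (fun t => sin ((n + 1) * t)) (cos ((n + 1) * θ) * ((n + 1) * 1)) θ :=
    (hasDerivAt_sin _).comp θ ((hasDerivAt_id θ).const_mul _)
  have heq := hlhs.unique (hrhs.congr_of_eventuallyEq (.of_forall fun t => U_real_cos t n))
  rw [U_real_eval_cos_eq_zero hθ h] at heq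
  field_simp
  linarith

end Polynomial.Chebyshev

theorem Polynomial.hasDerivAt_eval_one_div_two_mul_sqrt (p : ℝ[X]) {a : ℝ} (ha : 0 < a) :
    HasDerivAt (fun x => p.eval (1 / (2 * √x)))
      (-(derivative p).eval (1 / (2 * √a)) / (4 * √a ^ 3)) a := by
  have hs : 0 < √a := sqrt_pos.mpr ha
  have hinv : HasDerivAt (fun x => (2 * √x)⁻¹) (-(1 / (4 * √a ^ 3))) a := by
    refine (((hasDerivAt_sqrt ha.ne').const_mul 2).fun_inv (by positivity)).congr_deriv ?_
    field_simp
    norm_num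
  simp only [one_div] at hinv ⊢
  refine ((p.hasDerivAt _).comp a hinv).congr_deriv ?_
  ring

theorem Real.rpow_natCast_mul_rpow_one_sub_div_two {x : ℝ} (hx : 0 < x) (m : ℕ) :
    x ^ m * x ^ ((1 - m : ℝ) / 2) = √x ^ (m + 1) := by
  rw [← rpow_natCast, ← rpow_add hx, sqrt_eq_rpow, ← rpow_natCast, ← rpow_mul hx.le]
  congr 1
  push_cast
  ring

theorem Real.one_div_two_mul_sqrt_quarter_mul_one_add_tan_sq {θ : ℝ} (h : 0 < cos θ) :
    1 / (2 * √(1 / 4 * (1 + tan θ ^ 2))) = cos θ := by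
  rw [sqrt_mul (by norm_num), show √(1 / 4 : ℝ) = 1 / 2 by
    rw [show (1 / 4 : ℝ) = (1 / 2) ^ 2 by norm_num, sqrt_sq (by norm_num)], ← mul_assoc,
    ← inv_sqrt_one_add_tan_sq h]
  norm_num

theorem Real.pi_mul_div_succ_mem_Ioo {k m : ℕ} (hk : 1 ≤ k) (hkm : 2 * k ≤ m) :
    π * k / (m + 1) ∈ Set.Ioo 0 (π / 2) := by
  have hk' : (1 : ℝ) ≤ k := by exact_mod_cast hk
  have hkm' : (2 * k : ℝ) ≤ m := by exact_mod_cast hkm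
  constructor
  · positivity
  · rw [div_lt_div_iff₀ (by positivity) two_pos]
    nlinarith [pi_pos]

theorem residue_of_chebyshev_pole (m k : ℕ) (hk1 : 1 ≤ k) (hk2 : k ≤ m / 2)
    (gmk : ℝ) (hgmk : gmk = (1 / 4) * (1 + Real.tan (Real.pi * k / (m + 1)) ^ 2)) :
    Filter.Tendsto
      (fun g : ℝ => (g - gmk) *
        ((Real.sqrt g) ^ m /
          Polynomial.eval (1 / (2 * Real.sqrt g)) (Polynomial.Chebyshev.U ℝ (m : ℤ))))
      (𝓝[≠] gmk)
      (𝓝 (gmk ^ m * ((-1 : ℝ) ^ k / (m + 1)) * gmk ^ ((1 - (m : ℝ)) / 2) *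
        Real.tan (Real.pi * k / (m + 1)) ^ 2)) := by
  set θ := π * k / (m + 1) with hθ
  obtain ⟨hθ_pos, hθ_lt⟩ := pi_mul_div_succ_mem_Ioo hk1 (by omega : 2 * k ≤ m)
  have hcos : 0 < cos θ := cos_pos_of_mem_Ioo ⟨by linarith, hθ_lt⟩
  have hsin : sin θ ≠ 0 := (sin_pos_of_pos_of_lt_pi hθ_pos (by linarith)).ne'
  have hmθ : (((m : ℤ) : ℝ) + 1) * θ = k * π := by
    rw [hθ]
    push_cast
    field_simp
  have hsin_m : sin ((((m : ℤ) : ℝ) + 1) * θ) = 0 := by rw [hmθ]; exact sin_nat_mul_pi k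
  have hcos_m : cos ((((m : ℤ) : ℝ) + 1) * θ) = (-1) ^ k := by rw [hmθ]; exact cos_nat_mul_pi k
  have hg_pos : 0 < gmk := by rw [hgmk]; positivity
  have hs : 0 < √gmk := sqrt_pos.mpr hg_pos
  have hpole : 1 / (2 * √gmk) = cos θ :=
    hgmk ▸ one_div_two_mul_sqrt_quarter_mul_one_add_tan_sq hcos
  have hderiv := (U ℝ m).hasDerivAt_eval_one_div_two_mul_sqrt hg_pos
  rw [hpole, derivative_U_real_eval_cos hsin hsin_m, hcos_m] at hderiv
  have hlim := tendsto_sub_mul_div_of_hasDerivAt (h := fun g => √g ^ m) hderiv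
    (by rw [hpole]; exact U_real_eval_cos_eq_zero hsin hsin_m)
    (by simp [hsin, Nat.cast_add_one_ne_zero, hs.ne'])
    (continuous_sqrt.pow m).continuousAt
  convert hlim using 2
  have hε : ((-1 : ℝ) ^ k) ^ 2 = 1 := by rw [← pow_mul, mul_comm, pow_mul, neg_one_sq, one_pow]
  rw [show gmk ^ m * ((-1) ^ k / (m + 1)) * gmk ^ ((1 - m : ℝ) / 2) * tan θ ^ 2 =
      (gmk ^ m * gmk ^ ((1 - m : ℝ) / 2)) * ((-1) ^ k / (m + 1)) * tan θ ^ 2 by ring,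
    rpow_natCast_mul_rpow_one_sub_div_two hg_pos, tan_eq_sin_div_cos, ← hpole]
  push_cast
  field_simp
  rw [hε, pow_succ]
  ring
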